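/- If a group is a free product A * B with A and B both nontrivial, then either A * B ≅ Z/2Z * Z/2Z, which is isomorphic to the semidirect product Z ⋊ Z/2Z (the infinite dihedral group), or A * B contains a free subgroup of rank 2. -/

import Mathlib

open DihedralGroup Monoid

section Helpers

variable {A M : Type} [Group A] [Group M]

theorem sq1 (a : A) (ha : a ≠ 1) (hA : ∀ x : A, x = 1 ∨ x = a) : a * a = 1 := by
  rcases hA (a * a) with h | h
  · exact h
  · exact absurd (mul_left_cancel (h.trans (mul_one a).symm)) ha

noncomputable def hom2 (a : A) (ha : a ≠ 1) (hA : ∀ x : A, x = 1 ∨ x = a)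
    (t : M) (ht : t * t = 1) : A →* M := by
  classical
  exact MonoidHom.mk' (fun x => if x = 1 then 1 else t) (by
    have haa := sq1 a ha hA
    intro x y
    rcases hA x with rfl | rfl <;> rcases hA y with rfl | rfl <;>
      simp [ha, haa, ht])

theorem hom2_one (a : A) (ha : a ≠ 1) (hA : ∀ x : A, x = 1 ∨ x = a)
    (t : M) (ht : t * t = 1) : hom2 a ha hA t ht 1 = 1 := by simp [hom2]

theorem hom2_gen (a : A) (ha : a ≠ 1) (hA : ∀ x : A, x = 1 ∨ x = a)
    (t : M) (ht : t * t = 1) : hom2 a ha hA t ht a = t := by simp [hom2, ha]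

end Helpers

theorem r_one_zpow (n : ℤ) : (r 1 : DihedralGroup 0) ^ n = r n := by
  induction n using Int.induction_on with
  | zero => rw [zpow_zero, one_def]; rfl
  | succ n ih => rw [zpow_add_one, ih]; exact r_mul_r _ _
  | pred n ih =>
      rw [zpow_sub_one, ih, show ((r 1)⁻¹ : DihedralGroup 0) = r (-1 : ZMod 0) from rfl]
      exact r_mul_r _ _

def toi : ZMod 0 → ℤ := fun i => i

example : toi 0 = 0 := rfl
example : toi 1 = 1 := rfl

section Order2

variable {A B : Type} [Group A] [Group B]

noncomputable def dihedralEquiv (a : A) (b : B) (ha : a ≠ 1) (hb : b ≠ 1)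
    (hA : ∀ x : A, x = 1 ∨ x = a) (hB : ∀ y : B, y = 1 ∨ y = b) :
    Monoid.Coprod A B ≃* DihedralGroup 0 := by
  set s : Coprod A B := Coprod.inl a with hs
  set z : Coprod A B := Coprod.inl a * Coprod.inr b with hz
  have hss : s * s = 1 := by rw [hs, ← map_mul, sq1 a ha hA, map_one]
  have hsinv : s⁻¹ = s := inv_eq_of_mul_eq_one_right hss
  have hbinv : (Coprod.inr b : Coprod A B)⁻¹ = Coprod.inr b := by
    rw [← map_inv, inv_eq_of_mul_eq_one_right (sq1 b hb hB)]
  have hzinv : s * z * s = z⁻¹ := by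
    have hainv : (Coprod.inl a : Coprod A B)⁻¹ = Coprod.inl a := by
      rw [← map_inv, inv_eq_of_mul_eq_one_right (sq1 a ha hA)]
    rw [hz, hs, mul_inv_rev, hbinv, hainv, ← mul_assoc, ← map_mul, sq1 a ha hA,
      map_one, one_mul]
  have hconj : ∀ n : ℤ, s * z ^ n * s = z ^ (-n) := by
    intro n
    calc s * z ^ n * s = s * z ^ n * s⁻¹ := by rw [hsinv]
    _ = (s * z * s⁻¹) ^ n := by rw [conj_zpow]
    _ = (z⁻¹) ^ n := by rw [hsinv, hzinv]
    _ = z ^ (-n) := by rw [inv_zpow, zpow_neg]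
  have key : ∀ p q : ℤ, z ^ p * (s * z ^ q) = s * z ^ (q - p) := by
    intro p q
    calc z ^ p * (s * z ^ q) = (s * (s * z ^ p * s)) * z ^ q := by
          rw [← mul_assoc, ← mul_assoc, ← mul_assoc, hss, one_mul, mul_assoc]
    _ = s * z ^ (-p) * z ^ q := by rw [hconj, mul_assoc]
    _ = s * z ^ (q - p) := by rw [mul_assoc, ← zpow_add]; ring_nf
  refine MonoidHom.toMulEquiv
    (Coprod.lift (hom2 a ha hA (sr 0) (sr_mul_self 0)) (hom2 b hb hB (sr 1) (sr_mul_self 1)))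
    (MonoidHom.mk' (fun d => match d with
      | .r i => z ^ toi i
      | .sr i => s * z ^ toi i) ?_) ?_ ?_
  · intro d₁ d₂
    cases d₁ with
    | r i => cases d₂ with
      | r j => show z ^ toi (i + j) = z ^ toi i * z ^ toi j
               rw [show toi (i + j) = toi i + toi j from rfl, zpow_add]
      | sr j => show s * z ^ toi (j - i) = z ^ toi i * (s * z ^ toi j)
                rw [key, show toi (j - i) = toi j - toi i from rfl]
    | sr i => cases d₂ with
      | r j => show s * z ^ toi (i + j) = s * z ^ toi i * z ^ toi j
               rw [mul_assoc, ← zpow_add, show toi (i + j) = toi i + toi j from rfl]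
      | sr j => show z ^ toi (j - i) = s * z ^ toi i * (s * z ^ toi j)
                rw [mul_assoc, key, ← mul_assoc, hss, one_mul,
                  show toi (j - i) = toi j - toi i from rfl]
  · -- φ.comp ψ = id
    apply Coprod.hom_ext
    · ext x
      rcases hA x with rfl | rfl
      · simp only [map_one]
      · simp only [MonoidHom.comp_apply, MonoidHom.id_apply, Coprod.lift_apply_inl, hom2_gen]
        show s * z ^ toi 0 = Coprod.inl x
        rw [show toi 0 = 0 from rfl, zpow_zero, mul_one, hs]
    · ext y
      rcases hB y with rfl | rfl
      · simp only [map_one]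
      · simp only [MonoidHom.comp_apply, MonoidHom.id_apply, Coprod.lift_apply_inr, hom2_gen]
        show s * z ^ toi 1 = Coprod.inr y
        rw [show toi 1 = 1 from rfl, zpow_one, hz, hs, ← mul_assoc, ← map_mul, sq1 a ha hA,
          map_one, one_mul]
  · -- ψ.comp φ = id
    ext d
    cases d with
    | r i =>
        show Coprod.lift _ _ (z ^ toi i) = r i
        simp only [map_zpow, hz, map_mul, Coprod.lift_apply_inl, Coprod.lift_apply_inr, hom2_gen]
        rw [sr_mul_sr, sub_zero, _root_.r_one_zpow]
        rfl
    | sr i =>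
        show Coprod.lift _ _ (s * z ^ toi i) = sr i
        simp only [map_mul, map_zpow, hz, hs, Coprod.lift_apply_inl, Coprod.lift_apply_inr,
          hom2_gen]
        rw [sr_mul_sr, sub_zero, _root_.r_one_zpow]; show sr 0 * r i = sr i; rw [sr_mul_r, zero_add]

end Order2

abbrev Z2 : Type := Multiplicative (ZMod 2)
def g2 : Z2 := Multiplicative.ofAdd 1
theorem hg2 : g2 ≠ 1 := by decide
theorem hZ2 : ∀ x : Z2, x = 1 ∨ x = g2 := by decide

section Order2
variable {A B : Type} [Group A] [Group B]

noncomputable def z2Equiv (a : A) (b : B) (ha : a ≠ 1) (hb : b ≠ 1)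
    (hA : ∀ x : A, x = 1 ∨ x = a) (hB : ∀ y : B, y = 1 ∨ y = b) :
    Monoid.Coprod A B ≃* Monoid.Coprod Z2 Z2 := by
  have hinla : (Coprod.inl a : Coprod A B) * Coprod.inl a = 1 := by
    rw [← map_mul, sq1 a ha hA, map_one]
  have hinrb : (Coprod.inr b : Coprod A B) * Coprod.inr b = 1 := by
    rw [← map_mul, sq1 b hb hB, map_one]
  have hinlg : (Coprod.inl g2 : Coprod Z2 Z2) * Coprod.inl g2 = 1 := by
    rw [← map_mul, sq1 g2 hg2 hZ2, map_one]
  have hinrg : (Coprod.inr g2 : Coprod Z2 Z2) * Coprod.inr g2 = 1 := by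
    rw [← map_mul, sq1 g2 hg2 hZ2, map_one]
  refine MonoidHom.toMulEquiv
    (Coprod.lift (hom2 a ha hA (Coprod.inl g2) hinlg) (hom2 b hb hB (Coprod.inr g2) hinrg))
    (Coprod.lift (hom2 g2 hg2 hZ2 (Coprod.inl a) hinla) (hom2 g2 hg2 hZ2 (Coprod.inr b) hinrb))
    ?_ ?_
  · apply Coprod.hom_ext
    · ext x
      rcases hA x with rfl | rfl
      · simp only [map_one]
      · simp only [MonoidHom.comp_apply, MonoidHom.id_apply, Coprod.lift_apply_inl,
          hom2_gen]
    · ext y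
      rcases hB y with rfl | rfl
      · simp only [map_one]
      · simp only [MonoidHom.comp_apply, MonoidHom.id_apply, Coprod.lift_apply_inr,
          hom2_gen, Coprod.lift_apply_inl]
  · apply Coprod.hom_ext
    · refine MonoidHom.ext fun x => ?_
      rcases hZ2 x with rfl | rfl
      · simp only [map_one]
      · simp only [MonoidHom.comp_apply, MonoidHom.id_apply, Coprod.lift_apply_inl,
          hom2_gen]
    · refine MonoidHom.ext fun y => ?_
      rcases hZ2 y with rfl | rfl
      · simp only [map_one]
      · simp only [MonoidHom.comp_apply, MonoidHom.id_apply, Coprod.lift_apply_inr,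
          hom2_gen]
end Order2

open Monoid Monoid.CoprodI Monoid.CoprodI.Word

section PP
variable {ι : Type} [DecidableEq ι] {M : ι → Type} [∀ i, Group (M i)]
  [∀ i, DecidableEq (M i)]

theorem smul_fresh {j : ι} (m : M j) (hm : m ≠ 1) (w : Word M) (hw : w.fstIdx ≠ some j) :
    CoprodI.of m • w = Word.cons m w hw hm := Word.cons_eq_smul.symm

theorem smul_merge {j : ι} (m m' : M j) (t : Word M) (h1 : t.fstIdx ≠ some j) (h2 : m' ≠ 1)
    (h3 : m * m' ≠ 1) :
    CoprodI.of m • (Word.cons m' t h1 h2) = Word.cons (m * m') t h1 h3 := by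
  rw [Word.cons_eq_smul, ← mul_smul, ← map_mul, smul_fresh (m * m') h3 t h1]

theorem smul_cancel {j : ι} (m m' : M j) (t : Word M) (h1 : t.fstIdx ≠ some j) (h2 : m' ≠ 1)
    (h3 : m * m' = 1) :
    CoprodI.of m • (Word.cons m' t h1 h2) = t := by
  rw [Word.cons_eq_smul, ← mul_smul, ← map_mul, h3, map_one, one_smul]

theorem fstIdx_eq_head {w : Word M} {j : ι} {m : M j}
    (h : w.toList.head? = some ⟨j, m⟩) : w.fstIdx = some j := by
  rw [Word.fstIdx, h]; rfl

theorem sigma_snd_eq {j : ι} {x y : M j} (h : (⟨j, x⟩ : Σ i, M i) = ⟨j, y⟩) : x = y := by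
  injection h

theorem free_core {i₀ i₁ : ι} (hne : i₀ ≠ i₁) (a₁ a₂ : M i₀) (b : M i₁)
    (ha₁ : a₁ ≠ 1) (ha₂ : a₂ ≠ 1) (hne12 : a₁ ≠ a₂) (hb : b ≠ 1) :
    ∃ H : Subgroup (CoprodI M), Nonempty (H ≃* FreeGroup (Fin 2)) := by
  set aa : Fin 2 → M i₀ := ![a₁, a₂] with haadef
  have haa : ∀ k, aa k ≠ 1 := by
    intro k; fin_cases k <;> simpa [haadef]
  have haainj : Function.Injective aa := by
    intro k l h
    fin_cases k <;> fin_cases l <;>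
      simp only [haadef, Matrix.cons_val_zero, Matrix.cons_val_one, Matrix.head_cons] at h ⊢ <;>
      first
        | rfl
        | exact absurd h hne12
        | exact absurd h.symm hne12
  set gen : Fin 2 → CoprodI M := fun k => (CoprodI.of (aa k) * CoprodI.of b) ^ 2 with hgen
  set X : Fin 2 → Set (Word M) := fun k => {w | w.toList.head? = some ⟨i₀, aa k⟩} with hXdef
  set Y : Fin 2 → Set (Word M) :=
    fun k => {w | w.toList.head? = some ⟨i₁, b⁻¹⟩ ∧
      w.toList.tail.head? = some ⟨i₀, (aa k)⁻¹⟩} with hYdef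
  -- step lemmas
  have SB : ∀ (p : M i₀), p ≠ 1 → ∀ u : Word M, u.fstIdx = some i₀ →
      ((CoprodI.of p * CoprodI.of b) • u).toList.head? = some ⟨i₀, p⟩ := by
    intro p hp u hu
    have h1 : u.fstIdx ≠ some i₁ := by rw [hu]; intro h; exact hne (Option.some_injective _ h)
    rw [mul_smul, smul_fresh b hb u h1, smul_fresh p hp _ (by
      rw [Word.fstIdx_cons]; intro h; exact hne (Option.some_injective _ h).symm)]
    simp [Word.cons]
  have SA : ∀ (k : Fin 2) (w : Word M), w ∉ Y k →
      ((CoprodI.of (aa k) * CoprodI.of b) • w).fstIdx = some i₀ := by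
    intro k w hw
    rw [mul_smul]
    induction w using Word.consRecOn with
    | empty =>
        rw [smul_fresh b hb _ (by intro h; cases h),
          smul_fresh (aa k) (haa k) _ (by
            rw [Word.fstIdx_cons]; intro h; exact hne (Option.some_injective _ h).symm)]
        simp
    | cons j m t h1 h2 _ =>
        by_cases hj : j = i₁
        · subst hj
          by_cases hbm : b * m = 1
          · rw [smul_cancel b m t h1 h2 hbm]
            -- act by aa k on t, knowing t.fstIdx ≠ some i₁
            induction t using Word.consRecOn with
            | empty =>
                rw [smul_fresh (aa k) (haa k) _ (by intro h; cases h)]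
                simp
            | cons j' m' t' h1' h2' _ =>
                by_cases hj' : j' = i₀
                · subst hj'
                  by_cases hcan : aa k * m' = 1
                  · exfalso
                    apply hw
                    have hm : m = b⁻¹ := by
                      rw [← inv_eq_iff_mul_eq_one] at hbm; exact hbm.symm
                    have hm' : m' = (aa k)⁻¹ := by
                      rw [← inv_eq_iff_mul_eq_one] at hcan; exact hcan.symm
                    constructor
                    · show (Word.cons m _ h1 h2).toList.head? = _
                      simp [Word.cons, hm]
                    · show (Word.cons m _ h1 h2).toList.tail.head? = _
                      simp [Word.cons, hm']
                  · rw [smul_merge (aa k) m' t' h1' h2' hcan, Word.fstIdx_cons]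
                · rw [smul_fresh (aa k) (haa k) _ (by
                      rw [Word.fstIdx_cons]; intro h
                      exact hj' (Option.some_injective _ h)), Word.fstIdx_cons]
          · rw [smul_merge b m t h1 h2 hbm,
              smul_fresh (aa k) (haa k) _ (by
                rw [Word.fstIdx_cons]; intro h
                exact hne (Option.some_injective _ h).symm), Word.fstIdx_cons]
        · rw [smul_fresh b hb _ (by
              rw [Word.fstIdx_cons]; intro h
              exact hj (Option.some_injective _ h)),
            smul_fresh (aa k) (haa k) _ (by
              rw [Word.fstIdx_cons]; intro h
              exact hne (Option.some_injective _ h).symm), Word.fstIdx_cons]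
  have SB' : ∀ (k : Fin 2) (u : Word M), u.fstIdx = some i₁ →
      ((CoprodI.of b⁻¹ * CoprodI.of (aa k)⁻¹) • u) ∈ Y k := by
    intro k u hu
    have h1 : u.fstIdx ≠ some i₀ := by rw [hu]; intro h; exact hne (Option.some_injective _ h).symm
    rw [mul_smul, smul_fresh (aa k)⁻¹ (inv_ne_one.2 (haa k)) u h1,
      smul_fresh b⁻¹ (inv_ne_one.2 hb) _ (by
        rw [Word.fstIdx_cons]; intro h; exact hne (Option.some_injective _ h))]
    constructor <;> simp [Word.cons]
  have SA' : ∀ (k : Fin 2) (w : Word M), w ∉ X k →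
      ((CoprodI.of b⁻¹ * CoprodI.of (aa k)⁻¹) • w).fstIdx = some i₁ := by
    intro k w hw
    rw [mul_smul]
    induction w using Word.consRecOn with
    | empty =>
        rw [smul_fresh (aa k)⁻¹ (inv_ne_one.2 (haa k)) _ (by intro h; cases h),
          smul_fresh b⁻¹ (inv_ne_one.2 hb) _ (by
            rw [Word.fstIdx_cons]; intro h; exact hne (Option.some_injective _ h))]
        simp
    | cons j m t h1 h2 _ =>
        by_cases hj : j = i₀
        · subst hj
          by_cases hcan : (aa k)⁻¹ * m = 1
          · exfalso
            apply hw
            have hm : m = aa k := by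
              rw [inv_mul_eq_one] at hcan; exact hcan.symm
            show (Word.cons m _ h1 h2).toList.head? = _
            simp [Word.cons, hm]
          · rw [smul_merge (aa k)⁻¹ m t h1 h2 hcan,
              smul_fresh b⁻¹ (inv_ne_one.2 hb) _ (by
                rw [Word.fstIdx_cons]; intro h; exact hne (Option.some_injective _ h)),
              Word.fstIdx_cons]
        · rw [smul_fresh (aa k)⁻¹ (inv_ne_one.2 (haa k)) _ (by
              rw [Word.fstIdx_cons]; intro h
              exact hj (Option.some_injective _ h)),
            smul_fresh b⁻¹ (inv_ne_one.2 hb) _ (by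
              rw [Word.fstIdx_cons]; intro h; exact hne (Option.some_injective _ h)),
            Word.fstIdx_cons]
  have hinj : Function.Injective (FreeGroup.lift gen) := by
    apply FreeGroup.injective_lift_of_ping_pong gen X Y
    · -- nonempty
      intro k
      refine ⟨Word.cons (aa k) Word.empty (by simp [Word.empty, Word.fstIdx]) (haa k), ?_⟩
      simp [hXdef, Word.cons]
    · -- X disjoint
      intro k l hkl
      apply Set.disjoint_left.mpr
      intro w hwk hwl
      rw [hXdef] at hwk hwl
      simp only [Set.mem_setOf_eq] at hwk hwl
      exact hkl (haainj (sigma_snd_eq (Option.some_injective _ (hwk.symm.trans hwl))))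
    · -- Y disjoint
      intro k l hkl
      apply Set.disjoint_left.mpr
      intro w hwk hwl
      rw [hYdef] at hwk hwl
      simp only [Set.mem_setOf_eq] at hwk hwl
      exact hkl (haainj (inv_injective
        (sigma_snd_eq (Option.some_injective _ ((hwk.2).symm.trans hwl.2)))))
    · -- X Y disjoint
      intro k l
      apply Set.disjoint_left.mpr
      intro w hwk hwl
      rw [hXdef] at hwk; rw [hYdef] at hwl
      simp only [Set.mem_setOf_eq] at hwk hwl
      exact hne (congrArg Sigma.fst (Option.some_injective _ (hwk.symm.trans hwl.1)))
    · -- hX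
      intro k
      intro v hv
      rw [Set.mem_smul_set] at hv
      obtain ⟨w, hw, rfl⟩ := hv
      rw [hXdef]
      show (gen k • w).toList.head? = some ⟨i₀, aa k⟩
      rw [hgen]
      show ((CoprodI.of (aa k) * CoprodI.of b) ^ 2 • w).toList.head? = _
      rw [pow_two, mul_smul]
      exact SB (aa k) (haa k) _ (SA k w hw)
    · -- hY
      intro k
      intro v hv
      rw [Set.mem_smul_set] at hv
      obtain ⟨w, hw, rfl⟩ := hv
      have hginv : (gen k)⁻¹ = (CoprodI.of b⁻¹ * CoprodI.of (aa k)⁻¹) ^ 2 := by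
        rw [hgen]
        show (((CoprodI.of (aa k) * CoprodI.of b)) ^ 2)⁻¹ = _
        rw [← inv_pow, mul_inv_rev, map_inv, map_inv]
      show (gen⁻¹ k) • w ∈ Y k
      rw [Pi.inv_apply, hginv, pow_two, mul_smul]
      exact SB' k _ (SA' k w hw)
  exact ⟨(FreeGroup.lift gen).range, ⟨(MonoidHom.ofInjective hinj).symm⟩⟩
end PP

open Monoid Monoid.CoprodI

def Fam (A B : Type) : Bool → Type := fun b => cond b A B

instance famGroup (A B : Type) [Group A] [Group B] : ∀ i, Group (Fam A B i)
  | true => ‹Group A›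
  | false => ‹Group B›

def famHom (A B : Type) [Group A] [Group B] : ∀ i, Fam A B i →* Monoid.Coprod A B
  | true => Coprod.inl
  | false => Coprod.inr

noncomputable def famEquiv (A B : Type) [Group A] [Group B] :
    CoprodI (Fam A B) ≃* Monoid.Coprod A B := by
  refine MonoidHom.toMulEquiv (CoprodI.lift (famHom A B))
    (Coprod.lift (@CoprodI.of Bool (Fam A B) _ true) (@CoprodI.of Bool (Fam A B) _ false)) ?_ ?_
  · apply CoprodI.ext_hom
    intro i
    cases i <;> ext x <;> simp only [MonoidHom.comp_apply, CoprodI.lift_of, MonoidHom.id_apply]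
    · show (Coprod.lift _ _) (Coprod.inr x) = of x
      exact Coprod.lift_apply_inr _ _ x
    · show (Coprod.lift _ _) (Coprod.inl x) = of x
      exact Coprod.lift_apply_inl _ _ x
  · apply Coprod.hom_ext <;> ext x <;>
      simp only [MonoidHom.comp_apply, MonoidHom.id_apply, Coprod.lift_apply_inl,
        Coprod.lift_apply_inr, CoprodI.lift_of]
    · show famHom A B true x = Coprod.inl x
      rfl
    · show famHom A B false x = Coprod.inr x
      rfl

/-- If a group is a free product `A * B` with `A` and `B` both
nontrivial, then either `A * B ≅ ℤ/2 * ℤ/2`, which is the infinite dihedral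
group `ℤ ⋊ ℤ/2` (`DihedralGroup 0` in Mathlib), or `A * B` contains a free
subgroup of rank 2. -/
theorem free_product_dichotomy
    (A B : Type) [Group A] [Group B] [Nontrivial A] [Nontrivial B] :
    (Nonempty (Monoid.Coprod A B ≃*
        Monoid.Coprod (Multiplicative (ZMod 2)) (Multiplicative (ZMod 2))) ∧
      Nonempty (Monoid.Coprod A B ≃* DihedralGroup 0)) ∨
    ∃ H : Subgroup (Monoid.Coprod A B), Nonempty (H ≃* FreeGroup (Fin 2)) := by
  classical
  letI : ∀ i, DecidableEq (Fam A B i) := fun _ => Classical.decEq _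
  rcases Classical.em (∃ x y : A, x ≠ 1 ∧ y ≠ 1 ∧ x ≠ y) with hA2 | hA2
  · right
    obtain ⟨x, y, hx, hy, hxy⟩ := hA2
    obtain ⟨b, hb⟩ := exists_ne (1 : B)
    obtain ⟨H, ⟨eH⟩⟩ := @free_core Bool instDecidableEqBool (Fam A B) _ _ true false
      (by simp) x y b hx hy hxy hb
    exact ⟨H.map (famEquiv A B).toMonoidHom,
      ⟨(((famEquiv A B).subgroupMap H).symm.trans eH)⟩⟩
  · rcases Classical.em (∃ x y : B, x ≠ 1 ∧ y ≠ 1 ∧ x ≠ y) with hB2 | hB2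
    · right
      obtain ⟨x, y, hx, hy, hxy⟩ := hB2
      obtain ⟨a, ha⟩ := exists_ne (1 : A)
      obtain ⟨H, ⟨eH⟩⟩ := @free_core Bool instDecidableEqBool (Fam A B) _ _ false true
        (by simp) x y a hx hy hxy ha
      exact ⟨H.map (famEquiv A B).toMonoidHom,
        ⟨(((famEquiv A B).subgroupMap H).symm.trans eH)⟩⟩
    · left
      push_neg at hA2 hB2
      obtain ⟨a, ha⟩ := exists_ne (1 : A)
      obtain ⟨b, hb⟩ := exists_ne (1 : B)
      have hAall : ∀ x : A, x = 1 ∨ x = a := fun x =>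
        or_iff_not_imp_left.mpr (fun h => hA2 x a h ha)
      have hBall : ∀ x : B, x = 1 ∨ x = b := fun x =>
        or_iff_not_imp_left.mpr (fun h => hB2 x b h hb)
      exact ⟨⟨z2Equiv a b ha hb hAall hBall⟩, ⟨dihedralEquiv a b ha hb hAall hBall⟩⟩
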